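/- arXiv:2306.05511 — 2 statements merged into one kernel-verified Lean document; each statement's English description precedes it below -/
import Mathlib

section
/- Let A, Y, R, Z be discrete random variables on a finite probability space with all joint probabilities positive. If A ⟂ R | (Y, Z), then the conditional odds ratio between R and Y given (A, Z) does not depend on A: OR(R=0, Y=y | A=a, Z=z) = OR(R=0, Y=y | A=a', Z=z) for all a, a', y, z. -/
open scoped Classical
open Finset

/-- Probability of an event under a pmf on a finite sample space. -/
noncomputable def Pr {Ω : Type*} [Fintype Ω] (μ : Ω → ℝ) (P : Ω → Prop) : ℝ :=
  ∑ ω, if P ω then μ ω else 0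

/-- Conditional probability `p(P | Q)`. -/
noncomputable def cPr {Ω : Type*} [Fintype Ω] (μ : Ω → ℝ) (P Q : Ω → Prop) : ℝ :=
  Pr μ (fun ω => P ω ∧ Q ω) / Pr μ Q

theorem cPr_congr_right {Ω : Type*} [Fintype Ω] (μ : Ω → ℝ) {P Q Q' : Ω → Prop}
    (h : ∀ ω, Q ω ↔ Q' ω) : cPr μ P Q = cPr μ P Q' := by
  rw [funext fun ω => propext (h ω)]

theorem cPr_response_eq_of_condIndep_treatment {Ω 𝓐 𝓨 𝓩 ρ : Type*} [Fintype Ω] (μ : Ω → ℝ)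
    (A : Ω → 𝓐) (Y : Ω → 𝓨) (R : Ω → ρ) (Z : Ω → 𝓩)
    (hS2 : ∀ (a : 𝓐) (y : 𝓨) (z : 𝓩) (r : ρ),
      cPr μ (fun ω => R ω = r) (fun ω => A ω = a ∧ Y ω = y ∧ Z ω = z) =
      cPr μ (fun ω => R ω = r) (fun ω => Y ω = y ∧ Z ω = z))
    (a : 𝓐) (y : 𝓨) (z : 𝓩) (r : ρ) :
    cPr μ (fun ω => R ω = r) (fun ω => Y ω = y ∧ A ω = a ∧ Z ω = z) =
      cPr μ (fun ω => R ω = r) (fun ω => Y ω = y ∧ Z ω = z) := by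
  rw [cPr_congr_right μ fun ω => and_left_comm, hS2]

theorem odds_ratio_invariant_to_treatment_general
    {Ω 𝓐 𝓨 𝓩 : Type*} [Fintype Ω]
    (μ : Ω → ℝ)
    (A : Ω → 𝓐) (Y : Ω → 𝓨) (R : Ω → ℕ) (Z : Ω → 𝓩)
    (y0 : 𝓨)
    (hS2 : ∀ (a : 𝓐) (y : 𝓨) (z : 𝓩) (r : ℕ),
      cPr μ (fun ω => R ω = r) (fun ω => A ω = a ∧ Y ω = y ∧ Z ω = z) =
      cPr μ (fun ω => R ω = r) (fun ω => Y ω = y ∧ Z ω = z)) :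
    ∀ (a a' : 𝓐) (y : 𝓨) (z : 𝓩),
      (cPr μ (fun ω => R ω = 0) (fun ω => Y ω = y ∧ A ω = a ∧ Z ω = z) /
        cPr μ (fun ω => R ω = 1) (fun ω => Y ω = y ∧ A ω = a ∧ Z ω = z)) *
      (cPr μ (fun ω => R ω = 1) (fun ω => Y ω = y0 ∧ A ω = a ∧ Z ω = z) /
        cPr μ (fun ω => R ω = 0) (fun ω => Y ω = y0 ∧ A ω = a ∧ Z ω = z)) =
      (cPr μ (fun ω => R ω = 0) (fun ω => Y ω = y ∧ A ω = a' ∧ Z ω = z) /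
        cPr μ (fun ω => R ω = 1) (fun ω => Y ω = y ∧ A ω = a' ∧ Z ω = z)) *
      (cPr μ (fun ω => R ω = 1) (fun ω => Y ω = y0 ∧ A ω = a' ∧ Z ω = z) /
        cPr μ (fun ω => R ω = 0) (fun ω => Y ω = y0 ∧ A ω = a' ∧ Z ω = z)) := by
  intro a a' y z
  simp only [cPr_response_eq_of_condIndep_treatment μ A Y R Z hS2]

theorem odds_ratio_invariant_to_treatment
    {Ω 𝓐 𝓨 𝓩 : Type*} [Fintype Ω]
    (μ : Ω → ℝ) (hμ : ∀ ω, 0 ≤ μ ω) (hsum : ∑ ω, μ ω = 1)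
    (A : Ω → 𝓐) (Y : Ω → 𝓨) (R : Ω → ℕ) (Z : Ω → 𝓩)
    (hbin : ∀ ω, R ω = 0 ∨ R ω = 1) (y0 : 𝓨)
    (hpos : ∀ (a : 𝓐) (y : 𝓨) (z : 𝓩) (r : ℕ), r = 0 ∨ r = 1 →
      0 < Pr μ (fun ω => A ω = a ∧ Y ω = y ∧ Z ω = z ∧ R ω = r))
    (hS2 : ∀ (a : 𝓐) (y : 𝓨) (z : 𝓩) (r : ℕ),
      cPr μ (fun ω => R ω = r) (fun ω => A ω = a ∧ Y ω = y ∧ Z ω = z) =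
      cPr μ (fun ω => R ω = r) (fun ω => Y ω = y ∧ Z ω = z)) :
    ∀ (a a' : 𝓐) (y : 𝓨) (z : 𝓩),
      (cPr μ (fun ω => R ω = 0) (fun ω => Y ω = y ∧ A ω = a ∧ Z ω = z) /
        cPr μ (fun ω => R ω = 1) (fun ω => Y ω = y ∧ A ω = a ∧ Z ω = z)) *
      (cPr μ (fun ω => R ω = 1) (fun ω => Y ω = y0 ∧ A ω = a ∧ Z ω = z) /
        cPr μ (fun ω => R ω = 0) (fun ω => Y ω = y0 ∧ A ω = a ∧ Z ω = z)) =
      (cPr μ (fun ω => R ω = 0) (fun ω => Y ω = y ∧ A ω = a' ∧ Z ω = z) /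
        cPr μ (fun ω => R ω = 1) (fun ω => Y ω = y ∧ A ω = a' ∧ Z ω = z)) *
      (cPr μ (fun ω => R ω = 1) (fun ω => Y ω = y0 ∧ A ω = a' ∧ Z ω = z) /
        cPr μ (fun ω => R ω = 0) (fun ω => Y ω = y0 ∧ A ω = a' ∧ Z ω = z)) :=
  odds_ratio_invariant_to_treatment_general μ A Y R Z y0 hS2
end

section
/- Let X, Y, Z, W be discrete random variables on a finite probability space with all joint probabilities positive. Chen-type odds ratio factorization: p(X=x, Y=y | Z=z) = [p(X=x | Y=y0, Z=z) * p(Y=y | X=x0, Z=z) * OR(x,y,z)] / N(z), where OR is the conditional odds ratio with reference values (x0, y0) and N(z) = Σ_{x,y} p(X=x | Y=y0, Z=z) * p(Y=y | X=x0, Z=z) * OR(x,y,z). -/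
open scoped Classical
open Finset

/-- Conditional odds ratio of `X` and `Y` given `Z = z`, with reference values `x0, y0`. -/
noncomputable def condOR {Ω 𝓧 𝓨 𝓩 : Type*} [Fintype Ω]
    (μ : Ω → ℝ) (X : Ω → 𝓧) (Y : Ω → 𝓨) (Z : Ω → 𝓩) (x0 : 𝓧) (y0 : 𝓨)
    (x : 𝓧) (y : 𝓨) (z : 𝓩) : ℝ :=
  (cPr μ (fun ω => X ω = x) (fun ω => Y ω = y ∧ Z ω = z) *
    cPr μ (fun ω => X ω = x0) (fun ω => Y ω = y0 ∧ Z ω = z)) /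
  (cPr μ (fun ω => X ω = x0) (fun ω => Y ω = y ∧ Z ω = z) *
    cPr μ (fun ω => X ω = x) (fun ω => Y ω = y0 ∧ Z ω = z))


lemma Pr_congr {Ω : Type*} [Fintype Ω] (μ : Ω → ℝ) (P Q : Ω → Prop)
    (h : ∀ ω, P ω ↔ Q ω) : Pr μ P = Pr μ Q := by
  unfold Pr
  exact Finset.sum_congr rfl fun ω _ => by simp [h ω]

lemma sum_Pr_left {Ω 𝓧 : Type*} [Fintype Ω] [Fintype 𝓧]
    (μ : Ω → ℝ) (X : Ω → 𝓧) (Q : Ω → Prop) :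
    ∑ x, Pr μ (fun ω => X ω = x ∧ Q ω) = Pr μ Q := by
  unfold Pr
  rw [Finset.sum_comm]
  refine Finset.sum_congr rfl fun ω _ => ?_
  by_cases h : Q ω <;> simp [h]

lemma sum_Pr_mid {Ω 𝓨 : Type*} [Fintype Ω] [Fintype 𝓨]
    (μ : Ω → ℝ) (Y : Ω → 𝓨) (P Q : Ω → Prop) :
    ∑ y, Pr μ (fun ω => P ω ∧ Y ω = y ∧ Q ω) = Pr μ (fun ω => P ω ∧ Q ω) := by
  unfold Pr
  rw [Finset.sum_comm]
  refine Finset.sum_congr rfl fun ω _ => ?_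
  by_cases h : P ω ∧ Q ω
  · simp [h.1, h.2]
  · rcases not_and_or.mp h with h' | h' <;> simp [h']

theorem chen_odds_ratio_factorization
    {Ω 𝓧 𝓨 𝓩 : Type*} [Fintype Ω] [Fintype 𝓧] [Fintype 𝓨]
    (μ : Ω → ℝ) (hμ : ∀ ω, 0 ≤ μ ω) (hsum : ∑ ω, μ ω = 1)
    (X : Ω → 𝓧) (Y : Ω → 𝓨) (Z : Ω → 𝓩) (x0 : 𝓧) (y0 : 𝓨)
    (hpos : ∀ (x : 𝓧) (y : 𝓨) (z : 𝓩),
      0 < Pr μ (fun ω => X ω = x ∧ Y ω = y ∧ Z ω = z)) :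
    ∀ (x : 𝓧) (y : 𝓨) (z : 𝓩),
      cPr μ (fun ω => X ω = x ∧ Y ω = y) (fun ω => Z ω = z) =
      (cPr μ (fun ω => X ω = x) (fun ω => Y ω = y0 ∧ Z ω = z) *
        cPr μ (fun ω => Y ω = y) (fun ω => X ω = x0 ∧ Z ω = z) *
        condOR μ X Y Z x0 y0 x y z) /
      (∑ x' : 𝓧, ∑ y' : 𝓨,
        cPr μ (fun ω => X ω = x') (fun ω => Y ω = y0 ∧ Z ω = z) *
        cPr μ (fun ω => Y ω = y') (fun ω => X ω = x0 ∧ Z ω = z) *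
        condOR μ X Y Z x0 y0 x' y' z) := by
  intro x y z
  set P : 𝓧 → 𝓨 → ℝ := fun a b => Pr μ (fun ω => X ω = a ∧ Y ω = b ∧ Z ω = z) with hPdef
  have hSP : ∀ b, Pr μ (fun ω => Y ω = b ∧ Z ω = z) = ∑ a, P a b :=
    fun b => (sum_Pr_left μ X _).symm
  have hTP : ∀ a, Pr μ (fun ω => X ω = a ∧ Z ω = z) = ∑ b, P a b :=
    fun a => (sum_Pr_mid μ Y _ _).symm
  have hZP : Pr μ (fun ω => Z ω = z) = ∑ a, ∑ b, P a b := by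
    rw [← sum_Pr_left μ X (fun ω => Z ω = z)]
    exact Finset.sum_congr rfl fun a _ => hTP a
  have hPpos : ∀ a b, 0 < P a b := fun a b => hpos a b z
  have hSpos : ∀ b, 0 < ∑ a, P a b := fun b =>
    Finset.sum_pos (fun a _ => hPpos a b) ⟨x, Finset.mem_univ x⟩
  have hTpos : ∀ a, 0 < ∑ b, P a b := fun a =>
    Finset.sum_pos (fun b _ => hPpos a b) ⟨y, Finset.mem_univ y⟩
  have hZpos : 0 < ∑ a, ∑ b, P a b :=
    Finset.sum_pos (fun a _ => hTpos a) ⟨x, Finset.mem_univ x⟩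
  have hnum : ∀ b, Pr μ (fun ω => Y ω = b ∧ X ω = x0 ∧ Z ω = z) = P x0 b := by
    intro b
    exact Pr_congr μ _ _ (fun ω => by tauto)
  have key : ∀ a b,
      cPr μ (fun ω => X ω = a) (fun ω => Y ω = y0 ∧ Z ω = z) *
        cPr μ (fun ω => Y ω = b) (fun ω => X ω = x0 ∧ Z ω = z) *
        condOR μ X Y Z x0 y0 a b z =
      P a b * (P x0 y0 / ((∑ a', P a' y0) * (∑ b', P x0 b'))) := by
    intro a b
    unfold condOR cPr
    simp only []
    rw [hnum b, hSP, hSP, hTP]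
    show P a y0 / _ * (P x0 b / _) * (P a b / _ * (P x0 y0 / _) / (P x0 b / _ * (P a y0 / _))) = _
    have h1 := (hSpos y0).ne'
    have h2 := (hSpos b).ne'
    have h3 := (hTpos x0).ne'
    have h4 := (hPpos x0 b).ne'
    have h5 := (hPpos a y0).ne'
    field_simp
  have hlhs : Pr μ (fun ω => (X ω = x ∧ Y ω = y) ∧ Z ω = z) = P x y :=
    Pr_congr μ _ _ (fun ω => by tauto)
  have hsum' : (∑ x' : 𝓧, ∑ y' : 𝓨,
      cPr μ (fun ω => X ω = x') (fun ω => Y ω = y0 ∧ Z ω = z) *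
        cPr μ (fun ω => Y ω = y') (fun ω => X ω = x0 ∧ Z ω = z) *
        condOR μ X Y Z x0 y0 x' y' z) =
      (∑ a, ∑ b, P a b) * (P x0 y0 / ((∑ a', P a' y0) * (∑ b', P x0 b'))) := by
    rw [Finset.sum_mul]
    refine Finset.sum_congr rfl fun a _ => ?_
    rw [Finset.sum_mul]
    exact Finset.sum_congr rfl fun b _ => key a b
  rw [hsum', key x y]
  unfold cPr
  rw [hlhs, hZP]
  have hc : P x0 y0 / ((∑ a', P a' y0) * (∑ b', P x0 b')) ≠ 0 :=
    (div_pos (hPpos x0 y0) (mul_pos (hSpos y0) (hTpos x0))).ne'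
  rw [mul_div_mul_right _ _ hc]
end
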